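/- arXiv:2005.08486 — 5 statements merged into one kernel-verified Lean document; each statement's English description precedes it below -/
import Mathlib

section
/- The 3×3 matrix K₃(i√8), where K₃(ρ) has entries ρ^|j-k|, has -3 as an eigenvalue of algebraic multiplicity 2 and geometric multiplicity 1, with eigenvector (1, -i√2, 1). -/
/-!
K₃(ρ) commutes with the reversal of coordinates: it acts on the antisymmetric vector
(1, 0, -1) by 1 - ρ², and on the symmetric vectors (a, b, a) by the block [[1 + ρ², ρ], [2ρ, 1]].
For ρ² = -8 the first eigenvalue is 9, while the block has the double eigenvalue -3 but is not
scalar, so the eigenspace of -3 is the line through (1, -ρ/2, 1).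
-/

noncomputable def KMS (n : ℕ) (ρ : ℂ) : Matrix (Fin n) (Fin n) ℂ :=
  fun j k => ρ ^ (((j : ℤ) - (k : ℤ)).natAbs)

open Polynomial Matrix

theorem KMS_three_eq (ρ : ℂ) : KMS 3 ρ = !![1, ρ, ρ ^ 2; ρ, 1, ρ; ρ ^ 2, ρ, 1] := by
  ext j k
  fin_cases j <;> fin_cases k <;> simp [KMS]

theorem KMS_three_charpoly (ρ : ℂ) :
    (KMS 3 ρ).charpoly =
      (X - C (1 - ρ ^ 2)) * ((X - C (1 + ρ ^ 2)) * (X - 1) - C (2 * ρ ^ 2)) := by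
  rw [KMS_three_eq, charpoly, det_fin_three]
  simp only [charmatrix_apply, diagonal_apply, of_apply, cons_val', cons_val_zero, cons_val_one,
    cons_val_fin_one, cons_val, Fin.isValue, Fin.reduceEq, ↓reduceIte, map_one, map_pow, map_sub,
    map_add, map_mul, map_ofNat]
  ring

theorem KMS_three_mulVec (ρ : ℂ) (x : Fin 3 → ℂ) :
    KMS 3 ρ *ᵥ x =
      ![x 0 + ρ * x 1 + ρ ^ 2 * x 2, ρ * x 0 + x 1 + ρ * x 2, ρ ^ 2 * x 0 + ρ * x 1 + x 2] := by
  rw [KMS_three_eq]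
  ext i
  fin_cases i <;> simp [mulVec, dotProduct, Fin.sum_univ_three]

theorem KMS_three_charpoly_of_sq_eq {ρ : ℂ} (hρ : ρ ^ 2 = -8) :
    (KMS 3 ρ).charpoly = (X - C 9) * (X - C (-3)) ^ 2 := by
  rw [KMS_three_charpoly, hρ]
  simp only [map_sub, map_add, map_neg, map_mul, map_one, map_ofNat]
  ring

theorem KMS_three_mulVec_of_sq_eq {ρ : ℂ} (hρ : ρ ^ 2 = -8) :
    KMS 3 ρ *ᵥ ![1, -ρ / 2, 1] = (-3 : ℂ) • ![1, -ρ / 2, 1] := by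
  rw [KMS_three_mulVec, smul_vec3]
  simp only [cons_val_zero, cons_val_one, cons_val_two, head_cons, tail_cons]
  congr 1
  · linear_combination hρ / 2
  congr 1
  · ring
  congr 1
  · linear_combination hρ / 2

theorem KMS_three_eigenspace_of_sq_eq {ρ : ℂ} (hρ : ρ ^ 2 = -8) :
    Module.End.eigenspace (toLin' (KMS 3 ρ)) (-3) = ℂ ∙ ![1, -ρ / 2, 1] := by
  refine le_antisymm (fun x hx => ?_) ?_
  · rw [Module.End.mem_eigenspace_iff, toLin'_apply] at hx
    have h0 : x 0 + ρ * x 1 + ρ ^ 2 * x 2 = -3 * x 0 := by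
      simpa [KMS_three_mulVec] using congrFun hx 0
    have h1 : ρ * x 0 + x 1 + ρ * x 2 = -3 * x 1 := by
      simpa [KMS_three_mulVec] using congrFun hx 1
    have h2 : ρ ^ 2 * x 0 + ρ * x 1 + x 2 = -3 * x 2 := by
      simpa [KMS_three_mulVec] using congrFun hx 2
    have e2 : x 2 = x 0 := by linear_combination (h2 - h0 + (x 2 - x 0) * hρ) / 12
    have e1 : x 1 = -ρ / 2 * x 0 := by linear_combination h1 / 4 - ρ / 4 * e2
    refine Submodule.mem_span_singleton.2 ⟨x 0, ?_⟩
    ext i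
    fin_cases i <;> simp [e1, e2, mul_comm]
  · rw [Submodule.span_le, Set.singleton_subset_iff, SetLike.mem_coe,
      Module.End.mem_eigenspace_iff, toLin'_apply]
    exact KMS_three_mulVec_of_sq_eq hρ

/-- K₃(i√8) has -3 as an eigenvalue of algebraic multiplicity 2 and
geometric multiplicity 1, with eigenvector (1, -i√2, 1). -/
theorem stmt1 :
    (KMS 3 (Complex.I * Real.sqrt 8)).charpoly.rootMultiplicity (-3) = 2 ∧
    Module.finrank ℂ
      ↥(Module.End.eigenspace (Matrix.toLin' (KMS 3 (Complex.I * Real.sqrt 8))) (-3)) = 1 ∧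
    (![1, -Complex.I * Real.sqrt 2, 1] : Fin 3 → ℂ) ≠ 0 ∧
    (KMS 3 (Complex.I * Real.sqrt 8)).mulVec ![1, -Complex.I * Real.sqrt 2, 1]
      = (-3 : ℂ) • ![1, -Complex.I * Real.sqrt 2, 1] := by
  have hρ : (Complex.I * Real.sqrt 8) ^ 2 = -8 := by
    rw [mul_pow, Complex.I_sq, ← Complex.ofReal_pow, Real.sq_sqrt (by norm_num)]
    push_cast
    ring
  have hsqrt : Real.sqrt 8 = 2 * Real.sqrt 2 := by
    rw [show (8 : ℝ) = 2 ^ 2 * 2 by norm_num, Real.sqrt_mul (by norm_num),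
      Real.sqrt_sq (by norm_num)]
  have hv : -Complex.I * Real.sqrt 2 = -(Complex.I * Real.sqrt 8) / 2 := by
    rw [hsqrt]
    push_cast
    ring
  have hv_ne : (![1, -(Complex.I * Real.sqrt 8) / 2, 1] : Fin 3 → ℂ) ≠ 0 :=
    fun h => one_ne_zero (congrFun h 0)
  rw [hv]
  refine ⟨?_, ?_, hv_ne, KMS_three_mulVec_of_sq_eq hρ⟩
  · rw [KMS_three_charpoly_of_sq_eq hρ, rootMultiplicity_mul_X_sub_C_pow (X_sub_C_ne_zero 9),
      rootMultiplicity_X_sub_C]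
    norm_num
  · rw [KMS_three_eigenspace_of_sq_eq hρ, finrank_span_singleton hv_ne]
end

section
/- Let n ≥ 2, ρ ∈ ℂ, and μ ∈ ℂ with sin μ ≠ 0. Suppose ρ = sin((n+1)μ/2)/sin((n-1)μ/2) (with sin((n-1)μ/2) ≠ 0). Then λ = -sin(nμ)/sin(μ) is an eigenvalue of the n×n matrix Kₙ(ρ) = [ρ^|j-k|], with eigenvector v whose j-th component (0 ≤ j ≤ n-1) is v_j = sin(μ(j - (n-1)/2)). -/
open Finset Complex Matrix

section Recurrence

variable {R : Type*} [CommRing R] {c : R} {s : ℤ → R}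

theorem mul_sum_range_pow_mul_of_recurrence (hs : ∀ k, s (k + 1) + s (k - 1) = 2 * c * s k)
    (ρ : R) (M : ℕ) :
    (1 - 2 * c * ρ + ρ ^ 2) * ∑ m ∈ range M, ρ ^ m * s m
      = s 0 - ρ * s (-1) - ρ ^ M * s M + ρ ^ (M + 1) * s (M - 1) := by
  induction M with
  | zero => simp
  | succ M ih =>
    rw [sum_range_succ, mul_add, ih]
    push_cast
    rw [add_sub_cancel_right]
    linear_combination ρ ^ (M + 1) * hs M

omit c s in
theorem sum_range_pow_natAbs_sub_mul (ρ : R) (s : ℤ → R) {j n : ℕ} (hj : j < n) :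
    ∑ k ∈ range n, ρ ^ ((j : ℤ) - k).natAbs * s k
      = ∑ m ∈ range (j + 1), ρ ^ m * s (j - m) + ∑ m ∈ range (n - j), ρ ^ m * s (j + m) - s j := by
  obtain ⟨l, rfl⟩ := Nat.exists_eq_add_of_lt hj
  have left : ∑ k ∈ range (j + 1), ρ ^ ((j : ℤ) - k).natAbs * s k
      = ∑ m ∈ range (j + 1), ρ ^ m * s (j - m) := by
    rw [← sum_range_reflect]
    refine sum_congr rfl fun m hm => ?_
    have hm : m ≤ j := Nat.lt_succ_iff.mp (mem_range.mp hm)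
    rw [show j + 1 - 1 - m = j - m by omega, Nat.cast_sub hm]
    congr
    omega
  have right : ∑ m ∈ range (l + 1), ρ ^ m * s (j + m)
      = s j + ∑ m ∈ range l, ρ ^ ((j : ℤ) - ↑(j + 1 + m)).natAbs * s ↑(j + 1 + m) := by
    rw [sum_range_succ', add_comm]
    simp only [pow_zero, one_mul, Nat.cast_zero, add_zero]
    congr 1
    refine sum_congr rfl fun m _ => ?_
    push_cast
    congr 2
    · omega
    · ring
  rw [show j + l + 1 - j = l + 1 by omega, show j + l + 1 = (j + 1) + l by ring, sum_range_add,
    left, right]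
  ring

theorem mul_sum_range_pow_natAbs_sub_mul_of_recurrence
    (hs : ∀ k, s (k + 1) + s (k - 1) = 2 * c * s k) (ρ : R) {j n : ℕ} (hj : j < n) :
    (1 - 2 * c * ρ + ρ ^ 2) * ∑ k ∈ range n, ρ ^ ((j : ℤ) - k).natAbs * s k
      = (1 - ρ ^ 2) * s j - ρ ^ (j + 1) * (s (-1) - ρ * s 0)
        - ρ ^ (n - j) * (s n - ρ * s (n - 1)) := by
  have left : (1 - 2 * c * ρ + ρ ^ 2) * ∑ m ∈ range (j + 1), ρ ^ m * s (j - m)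
      = s j - ρ * s (j + 1) - ρ ^ (j + 1) * s (-1) + ρ ^ (j + 2) * s 0 := by
    have := mul_sum_range_pow_mul_of_recurrence (s := fun m => s (j - m))
      (fun k => by linear_combination (norm := ring_nf) hs (j - k)) ρ (j + 1)
    convert this using 3 <;> push_cast <;> ring_nf
  have right : (1 - 2 * c * ρ + ρ ^ 2) * ∑ m ∈ range (n - j), ρ ^ m * s (j + m)
      = s j - ρ * s (j - 1) - ρ ^ (n - j) * s n + ρ ^ (n - j + 1) * s (n - 1) := by
    have := mul_sum_range_pow_mul_of_recurrence (s := fun m => s (j + m))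
      (fun k => by linear_combination (norm := ring_nf) hs (j + k)) ρ (n - j)
    convert this using 3 <;> push_cast [hj.le] <;> ring_nf
  rw [sum_range_pow_natAbs_sub_mul ρ s hj]
  linear_combination left + right - ρ * hs j

end Recurrence

theorem sin_mul_sub_add_sin_mul_sub (μ a : ℂ) (k : ℤ) :
    sin (μ * (↑(k + 1) - a)) + sin (μ * (↑(k - 1) - a)) = 2 * cos μ * sin (μ * (k - a)) := by
  push_cast
  rw [show μ * (k + 1 - a) = μ * (k - a) + μ by ring, show μ * (k - 1 - a) = μ * (k - a) - μ by ring,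
    sin_add, sin_sub]
  ring

theorem sin_sq_sub_two_mul_cos_mul_sin_add_sq (x μ : ℂ) :
    sin (x + μ) ^ 2 - 2 * cos μ * sin (x + μ) * sin x + sin x ^ 2 = sin μ ^ 2 := by
  rw [sin_add]
  linear_combination sin μ ^ 2 * sin_sq_add_cos_sq x - sin x ^ 2 * sin_sq_add_cos_sq μ

theorem sin_sq_sub_sin_add_sq (x μ : ℂ) :
    sin x ^ 2 - sin (x + μ) ^ 2 = -(sin μ * sin (2 * x + μ)) := by
  rw [sin_add, two_mul, add_assoc, sin_add x (x + μ), sin_add, cos_add]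
  linear_combination -sin x ^ 2 * sin_sq_add_cos_sq μ

section SineRatio

variable {x μ ρ : ℂ}

theorem one_sub_two_mul_cos_mul_add_sq_mul_sin_sq (hρ : ρ * sin x = sin (x + μ)) :
    (1 - 2 * cos μ * ρ + ρ ^ 2) * sin x ^ 2 = sin μ ^ 2 := by
  rw [← sin_sq_sub_two_mul_cos_mul_sin_add_sq x μ, ← hρ]
  ring

theorem neg_sin_div_sin_mul_eq_one_sub_sq (hx : sin x ≠ 0)
    (hρ : ρ * sin x = sin (x + μ)) :
    -(sin (2 * x + μ) / sin μ) * (1 - 2 * cos μ * ρ + ρ ^ 2) = 1 - ρ ^ 2 := by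
  apply mul_right_cancel₀ (pow_ne_zero 2 hx)
  rw [mul_assoc, one_sub_two_mul_cos_mul_add_sq_mul_sin_sq hρ]
  field_simp
  linear_combination -sin_sq_sub_sin_add_sq x μ + (ρ * sin x + sin (x + μ)) * hρ

end SineRatio

theorem KMS_mulVec_apply (n : ℕ) (ρ : ℂ) (s : ℤ → ℂ) (j : Fin n) :
    (KMS n ρ *ᵥ fun k => s k) j = ∑ k ∈ range n, ρ ^ ((j : ℤ) - k).natAbs * s k := by
  simp only [Matrix.mulVec, dotProduct, KMS]
  exact Fin.sum_univ_eq_sum_range (fun k => ρ ^ ((j : ℤ) - k).natAbs * s k) n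

theorem stmt4_general (n : ℕ) (ρ μ : ℂ) (hμ : Complex.sin μ ≠ 0)
    (hden : Complex.sin ((n - 1) * μ / 2) ≠ 0)
    (hρ : ρ = Complex.sin ((n + 1) * μ / 2) / Complex.sin ((n - 1) * μ / 2))
    (v : Fin n → ℂ)
    (hv : ∀ j : Fin n, v j = Complex.sin (μ * ((j : ℂ) - (n - 1) / 2))) :
    (KMS n ρ).mulVec v = (-(Complex.sin (n * μ) / Complex.sin μ)) • v := by
  set x : ℂ := (n - 1) * μ / 2
  obtain ⟨s, hs_def⟩ : ∃ s : ℤ → ℂ, ∀ k, s k = sin (μ * (k - (n - 1) / 2)) := ⟨_, fun _ => rfl⟩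
  have hs (k : ℤ) : s (k + 1) + s (k - 1) = 2 * cos μ * s k := by
    simp only [hs_def, sin_mul_sub_add_sin_mul_sub]
  have hρx : ρ * sin x = sin (x + μ) := by
    rw [hρ, div_mul_cancel₀ _ hden]; congr 1; ring
  have hleft : s (-1) - ρ * s 0 = 0 := by
    have h₁ : s (-1) = -sin (x + μ) := by rw [hs_def, ← sin_neg]; congr 1; push_cast; ring
    have h₀ : s 0 = -sin x := by rw [hs_def, ← sin_neg]; congr 1; push_cast; ring
    linear_combination h₁ - ρ * h₀ + hρx
  have hright : s n - ρ * s (n - 1) = 0 := by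
    have hn : s n = sin (x + μ) := by rw [hs_def]; congr 1; push_cast; ring
    have hn₁ : s (n - 1) = sin x := by rw [hs_def]; congr 1; push_cast; ring
    linear_combination hn - ρ * hn₁ - hρx
  have hD : 1 - 2 * cos μ * ρ + ρ ^ 2 ≠ 0 := fun h => hμ <| pow_eq_zero_iff two_ne_zero |>.mp <| by
    rw [← one_sub_two_mul_cos_mul_add_sq_mul_sin_sq hρx, h, zero_mul]
  have heigen := neg_sin_div_sin_mul_eq_one_sub_sq hden hρx
  rw [show 2 * x + μ = n * μ by ring] at heigen
  have hvs : v = fun k : Fin n => s k := funext fun k => by simp [hs_def, hv]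
  ext j
  apply mul_left_cancel₀ hD
  rw [hvs, KMS_mulVec_apply, mul_sum_range_pow_natAbs_sub_mul_of_recurrence hs ρ j.isLt, hleft,
    hright]
  simp only [Pi.smul_apply, smul_eq_mul]
  linear_combination -s j * heigen

/-- type-1 eigenpair: if sin μ ≠ 0 and
ρ = sin((n+1)μ/2)/sin((n-1)μ/2) with nonzero denominator, then
λ = -sin(nμ)/sin μ is an eigenvalue of Kₙ(ρ) with eigenvector
v_j = sin(μ(j - (n-1)/2)), provided v ≠ 0. -/
theorem stmt4 (n : ℕ) (hn : 2 ≤ n) (ρ μ : ℂ) (hμ : Complex.sin μ ≠ 0)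
    (hden : Complex.sin ((n - 1) * μ / 2) ≠ 0)
    (hρ : ρ = Complex.sin ((n + 1) * μ / 2) / Complex.sin ((n - 1) * μ / 2))
    (v : Fin n → ℂ)
    (hv : ∀ j : Fin n, v j = Complex.sin (μ * ((j : ℂ) - (n - 1) / 2)))
    (hv0 : v ≠ 0) :
    (KMS n ρ).mulVec v = (-(Complex.sin (n * μ) / Complex.sin μ)) • v :=
  stmt4_general n ρ μ hμ hden hρ v hv
end

section
/- Let n ≥ 2, ρ ∈ ℂ, and μ ∈ ℂ with sin μ ≠ 0. Suppose ρ = cos((n+1)μ/2)/cos((n-1)μ/2) (with cos((n-1)μ/2) ≠ 0). Then λ = sin(nμ)/sin(μ) is an eigenvalue of the n×n matrix Kₙ(ρ) = [ρ^|j-k|], with eigenvector v whose j-th component (0 ≤ j ≤ n-1) is v_j = cos(μ(j - (n-1)/2)). -/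
open Finset Complex Matrix

theorem mul_sum_range_pow_natAbs_sub_mul_pow {R : Type*} [CommRing R] (ρ z : R) {n j : ℕ}
    (hj : j < n) :
    (z - ρ) * (1 - ρ * z) * ∑ k ∈ range n, ρ ^ ((j : ℤ) - k).natAbs * z ^ k =
      (1 - ρ ^ 2) * z ^ (j + 1) - (1 - ρ * z) * ρ ^ (j + 1) - (z - ρ) * ρ ^ (n - j) * z ^ n := by
  obtain ⟨N, rfl⟩ : ∃ N, n = j + 1 + N := ⟨n - (j + 1), by omega⟩
  have left : (∑ k ∈ range (j + 1), ρ ^ ((j : ℤ) - k).natAbs * z ^ k) * (z - ρ) =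
      z ^ (j + 1) - ρ ^ (j + 1) := by
    rw [← geom_sum₂_mul]
    congr 1
    refine sum_congr rfl fun k hk => ?_
    rw [mul_comm, show ((j : ℤ) - k).natAbs = j + 1 - 1 - k by
      have := mem_range.1 hk; omega]
  have right : (∑ m ∈ range N, ρ ^ ((j : ℤ) - ↑(j + 1 + m)).natAbs * z ^ (j + 1 + m)) *
      (ρ * z - 1) = ρ * z ^ (j + 1) * ((ρ * z) ^ N - 1) := by
    rw [← geom_sum_mul, ← mul_assoc, mul_sum]
    congr 1
    refine sum_congr rfl fun m _ => ?_
    rw [show ((j : ℤ) - ↑(j + 1 + m)).natAbs = m + 1 by omega]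
    ring
  rw [sum_range_add, show j + 1 + N - j = N + 1 by omega]
  linear_combination (1 - ρ * z) * left - (z - ρ) * right

-- For `z z' = 1` the factor `(z - ρ)(1 - ρ z)` above is `z (1 - ρ (z + z') + ρ²)`.
theorem KMS_mulVec_pow_of_mul_eq_one (n : ℕ) (ρ z z' : ℂ) (h : z * z' = 1) (j : Fin n) :
    (1 - ρ * (z + z') + ρ ^ 2) * (KMS n ρ *ᵥ fun k => z ^ (k : ℕ)) j =
      (1 - ρ ^ 2) * z ^ (j : ℕ) - (z' - ρ) * ρ ^ ((j : ℕ) + 1)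
        - (1 - ρ * z') * ρ ^ (n - j) * z ^ n := by
  have key := mul_sum_range_pow_natAbs_sub_mul_pow ρ z j.isLt
  rw [← Fin.sum_univ_eq_sum_range] at key
  simp only [mulVec, dotProduct, KMS]
  set S := ∑ k : Fin n, ρ ^ ((j : ℤ) - (k : ℕ)).natAbs * z ^ (k : ℕ)
  linear_combination z' * key + ((1 - ρ ^ 2) * z ^ (j : ℕ) + ρ ^ ((j : ℕ) + 2)
    - ρ ^ (n - j) * z ^ n - S * (1 - ρ * z + ρ ^ 2)) * h

theorem two_cos_mul_natCast_add (μ φ : ℂ) (k : ℕ) :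
    2 * cos (μ * k + φ) = exp (φ * I) * exp (μ * I) ^ k + exp (-φ * I) * exp (-μ * I) ^ k := by
  simp only [two_cos, ← exp_nat_mul, ← exp_add]
  ring_nf

theorem KMS_mulVec_cos (n : ℕ) (ρ μ φ : ℂ) (j : Fin n) :
    (1 - 2 * ρ * cos μ + ρ ^ 2) * (KMS n ρ *ᵥ fun k => cos (μ * (k : ℕ) + φ)) j =
      (1 - ρ ^ 2) * cos (μ * (j : ℕ) + φ) - ρ ^ ((j : ℕ) + 1) * (cos (φ - μ) - ρ * cos φ)
        - ρ ^ (n - j) * (cos (μ * n + φ) - ρ * cos (μ * (n - 1) + φ)) := by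
  have hv : (fun k : Fin n => cos (μ * (k : ℕ) + φ)) =
      (exp (φ * I) / 2) • (fun k : Fin n => exp (μ * I) ^ (k : ℕ)) +
        (exp (-φ * I) / 2) • (fun k : Fin n => exp (-μ * I) ^ (k : ℕ)) := by
    ext k
    simp only [Pi.add_apply, Pi.smul_apply, smul_eq_mul]
    linear_combination two_cos_mul_natCast_add μ φ k / 2
  have hφμ : 2 * cos (φ - μ) = exp (φ * I) * exp (-μ * I) + exp (-φ * I) * exp (μ * I) := by
    simp only [two_cos, ← exp_add]
    ring_nf
  have hφn : 2 * cos (μ * (n - 1) + φ) = exp (φ * I) * exp (μ * I) ^ n * exp (-μ * I) +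
      exp (-φ * I) * exp (-μ * I) ^ n * exp (μ * I) := by
    simp only [two_cos, ← exp_nat_mul, ← exp_add]
    ring_nf
  have hz : exp (μ * I) * exp (-μ * I) = 1 := by rw [← exp_add]; simp
  have Lz := KMS_mulVec_pow_of_mul_eq_one n ρ _ _ hz j
  have Lz' := KMS_mulVec_pow_of_mul_eq_one n ρ _ _ ((mul_comm _ _).trans hz) j
  rw [hv, mulVec_add, mulVec_smul, mulVec_smul]
  simp only [Pi.add_apply, Pi.smul_apply, smul_eq_mul]
  linear_combination (exp (φ * I) / 2) * Lz + (exp (-φ * I) / 2) * Lz'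
    - ρ * (exp (φ * I) / 2 * (KMS n ρ *ᵥ fun k => exp (μ * I) ^ (k : ℕ)) j
      + exp (-φ * I) / 2 * (KMS n ρ *ᵥ fun k => exp (-μ * I) ^ (k : ℕ)) j) * two_cos μ
    - (1 - ρ ^ 2) / 2 * two_cos_mul_natCast_add μ φ j
    + ρ ^ ((j : ℕ) + 1) / 2 * (hφμ - ρ * two_cos φ)
    + ρ ^ (n - j) / 2 * (two_cos_mul_natCast_add μ φ n - ρ * hφn)

theorem KMS_mulVec_cos_centered (n : ℕ) (ρ μ : ℂ)
    (hρ : ρ * cos ((n - 1) * μ / 2) = cos ((n + 1) * μ / 2)) (j : Fin n) :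
    (1 - 2 * ρ * cos μ + ρ ^ 2) * (KMS n ρ *ᵥ fun k => cos (μ * ((k : ℕ) - (n - 1) / 2))) j =
      (1 - ρ ^ 2) * cos (μ * ((j : ℕ) - (n - 1) / 2)) := by
  have hφ (k : ℕ) : μ * (k - (n - 1) / 2) = μ * k + -((n - 1) * μ / 2) := by ring
  have hleft : cos (-((n - 1) * μ / 2) - μ) = cos ((n + 1) * μ / 2) := by
    rw [← cos_neg]; congr 1; ring
  have hright : cos (μ * n + -((n - 1) * μ / 2)) = cos ((n + 1) * μ / 2) := by congr 1; ring
  have hright' : cos (μ * (n - 1) + -((n - 1) * μ / 2)) = cos ((n - 1) * μ / 2) := by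
    congr 1; ring
  simp only [hφ]
  rw [KMS_mulVec_cos, hleft, cos_neg, hright, hright', hρ, sub_self]
  ring

theorem cos_sq_mul_one_sub_two_mul_cos_sub_add_sq {ρ x y : ℂ} (h : ρ * cos y = cos x) :
    cos y ^ 2 * (1 - 2 * ρ * cos (x - y) + ρ ^ 2) = sin (x - y) ^ 2 := by
  rw [cos_sub, sin_sub]
  linear_combination (ρ * cos y + cos x - 2 * cos y * (cos x * cos y + sin x * sin y)) * h
    - cos x ^ 2 * sin_sq_add_cos_sq y - cos y ^ 2 * sin_sq_add_cos_sq x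

theorem cos_sq_mul_one_sub_sq {ρ x y : ℂ} (h : ρ * cos y = cos x) :
    cos y ^ 2 * (1 - ρ ^ 2) = sin (y + x) * sin (x - y) := by
  rw [sin_add, sin_sub]
  linear_combination -(ρ * cos y + cos x) * h
    - cos y ^ 2 * sin_sq_add_cos_sq x + cos x ^ 2 * sin_sq_add_cos_sq y

theorem stmt5_general (n : ℕ) (ρ μ : ℂ) (hμ : Complex.sin μ ≠ 0)
    (hden : Complex.cos ((n - 1) * μ / 2) ≠ 0)
    (hρ : ρ = Complex.cos ((n + 1) * μ / 2) / Complex.cos ((n - 1) * μ / 2))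
    (v : Fin n → ℂ)
    (hv : ∀ j : Fin n, v j = Complex.cos (μ * ((j : ℂ) - (n - 1) / 2))) :
    (KMS n ρ).mulVec v = (Complex.sin (n * μ) / Complex.sin μ) • v := by
  have hρc : ρ * cos ((n - 1) * μ / 2) = cos ((n + 1) * μ / 2) := by
    rw [hρ]; exact div_mul_cancel₀ _ hden
  have hsub : (n + 1) * μ / 2 - (n - 1) * μ / 2 = μ := by ring
  have hsin_sq := cos_sq_mul_one_sub_two_mul_cos_sub_add_sq hρc
  have hsin_mul := cos_sq_mul_one_sub_sq hρc
  rw [hsub] at hsin_sq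
  rw [hsub, show (n - 1) * μ / 2 + (n + 1) * μ / 2 = n * μ by ring] at hsin_mul
  have hv' : v = fun k : Fin n => cos (μ * ((k : ℕ) - (n - 1) / 2)) := funext hv
  funext j
  have key := KMS_mulVec_cos_centered n ρ μ hρc j
  rw [← hv', ← hv j] at key
  rw [Pi.smul_apply, smul_eq_mul, div_mul_eq_mul_div, eq_div_iff hμ]
  apply mul_left_cancel₀ hμ
  linear_combination cos ((n - 1) * μ / 2) ^ 2 * key - (KMS n ρ *ᵥ v) j * hsin_sq + v j * hsin_mul

/-- type-2 eigenpair: if sin μ ≠ 0 and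
ρ = cos((n+1)μ/2)/cos((n-1)μ/2) with nonzero denominator, then
λ = sin(nμ)/sin μ is an eigenvalue of Kₙ(ρ) with eigenvector
v_j = cos(μ(j - (n-1)/2)), provided v ≠ 0. -/
theorem stmt5 (n : ℕ) (hn : 2 ≤ n) (ρ μ : ℂ) (hμ : Complex.sin μ ≠ 0)
    (hden : Complex.cos ((n - 1) * μ / 2) ≠ 0)
    (hρ : ρ = Complex.cos ((n + 1) * μ / 2) / Complex.cos ((n - 1) * μ / 2))
    (v : Fin n → ℂ)
    (hv : ∀ j : Fin n, v j = Complex.cos (μ * ((j : ℂ) - (n - 1) / 2)))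
    (hv0 : v ≠ 0) :
    (KMS n ρ).mulVec v = (Complex.sin (n * μ) / Complex.sin μ) • v :=
  stmt5_general n ρ μ hμ hden hρ v hv
end

section
/- Let n ≥ 3 be odd and let xₙ > 1 satisfy Tₙ(xₙ) = nxₙ. Then U_{n-1}(i√(xₙ² - 1)) = (-1)^((n-1)/2) · n, where U_{n-1} is the Chebyshev polynomial of the second kind and i the imaginary unit. -/
/-!
Write `n = 2m + 1` and `s = i √(x² - 1)`, so that `s² + x² = 1` and `(s, x) = (sin z, cos z)` for
some complex `z`. Evaluating `U_{n-1}(cos θ) sin θ = sin (n θ)` at `θ = π/2 - z` gives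
`U_{n-1}(s) x = (-1)^m Tₙ(x) = (-1)^m n x`, and `x ≠ 0` can be cancelled.
-/

open Polynomial Polynomial.Chebyshev Complex
open scoped Real

theorem Complex.exists_cos_eq_sin_eq_of_sq_add_sq {x s : ℂ} (h : s ^ 2 + x ^ 2 = 1) :
    ∃ z, cos z = x ∧ sin z = s := by
  obtain ⟨z, rfl⟩ := cos_surjective x
  have hsin : (sin z - s) * (sin z + s) = 0 := by linear_combination sin_sq_add_cos_sq z - h
  rcases mul_eq_zero.mp hsin with hsub | hadd
  · exact ⟨z, rfl, sub_eq_zero.mp hsub⟩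
  · exact ⟨-z, cos_neg z, by rw [sin_neg]; linear_combination -hadd⟩

namespace Polynomial.Chebyshev

theorem T_eval_ofReal (n : ℤ) (x : ℝ) : (T ℂ n).eval (x : ℂ) = (((T ℝ n).eval x : ℝ) : ℂ) := by
  rw [← map_T ofRealHom, eval_map]
  exact eval₂_at_apply ofRealHom x

theorem U_two_mul_complex_sin_mul_cos (m : ℕ) (z : ℂ) :
    (U ℂ (2 * m)).eval (sin z) * cos z = (-1) ^ m * cos ((2 * m + 1) * z) := by
  have h := U_complex_cos (π / 2 - z) (2 * m)
  rw [cos_pi_div_two_sub, sin_pi_div_two_sub] at h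
  rw [h, show ((2 * m : ℤ) + 1 : ℂ) * (π / 2 - z) = π / 2 - (2 * m + 1) * z + m * π by
      push_cast; ring,
    sin_antiperiodic.add_nat_mul_eq, sin_pi_div_two_sub]

theorem U_two_mul_eval_mul_eq_T_eval {s x : ℂ} (h : s ^ 2 + x ^ 2 = 1) (m : ℕ) :
    (U ℂ (2 * m)).eval s * x = (-1) ^ m * (T ℂ (2 * m + 1)).eval x := by
  obtain ⟨z, rfl, rfl⟩ := exists_cos_eq_sin_eq_of_sq_add_sq h
  rw [U_two_mul_complex_sin_mul_cos, T_complex_cos]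
  push_cast
  ring

end Polynomial.Chebyshev

theorem stmt12_general (n : ℕ) (hodd : Odd n) (x : ℝ) (hx : 1 < x)
    (hT : (Polynomial.Chebyshev.T ℝ n).eval x = n * x) :
    (Polynomial.Chebyshev.U ℂ ((n : ℤ) - 1)).eval (Complex.I * Real.sqrt (x ^ 2 - 1))
      = (-1) ^ ((n - 1) / 2) * n := by
  obtain ⟨m, rfl⟩ := hodd
  have hs : (I * Real.sqrt (x ^ 2 - 1) : ℂ) ^ 2 + (x : ℂ) ^ 2 = 1 := by
    rw [mul_pow, I_sq, ← ofReal_pow, Real.sq_sqrt (by nlinarith)]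
    push_cast
    ring
  have key := U_two_mul_eval_mul_eq_T_eval hs m
  rw [show (2 * m + 1 : ℤ) = ((2 * m + 1 : ℕ) : ℤ) by push_cast; rfl, T_eval_ofReal, hT] at key
  rw [show ((2 * m + 1 : ℕ) : ℤ) - 1 = 2 * m by push_cast; ring,
    show (2 * m + 1 - 1) / 2 = m by omega]
  have hx0 : (x : ℂ) ≠ 0 := ofReal_ne_zero.mpr (by positivity)
  exact mul_right_cancel₀ hx0 (by rw [key]; push_cast; ring)

/-- For odd n ≥ 3 and xₙ > 1 with Tₙ(xₙ) = n xₙ, one has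
U_{n-1}(i √(xₙ² - 1)) = (-1)^((n-1)/2) n. -/
theorem stmt12 (n : ℕ) (hn : 3 ≤ n) (hodd : Odd n) (x : ℝ) (hx : 1 < x)
    (hT : (Polynomial.Chebyshev.T ℝ n).eval x = n * x) :
    (Polynomial.Chebyshev.U ℂ ((n : ℤ) - 1)).eval (Complex.I * Real.sqrt (x ^ 2 - 1))
      = (-1) ^ ((n - 1) / 2) * n :=
  stmt12_general n hodd x hx hT
end

section
/- For even k ≥ 0 and z ∈ ℂ with z ≠ 0, Uₖ(√(1 - z²)) = (-1)^{k/2} z^{-1} T_{k+1}(z), and for odd k ≥ 1, Uₖ(√(1 - z²)) = (-1)^{(k-1)/2} (√(1 - z²)/z) Uₖ(z), for any fixed choice of the complex square root √(1 - z²). -/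
/-!
Writing `z = cos θ` and `s = sin θ = cos (π/2 - θ)`, the identities are the relations
`sin ((k+1)(π/2 - θ)) = ± cos ((k+1)θ)` or `± sin ((k+1)θ)` according to the parity of `k`.
Algebraically, they hold in any commutative ring in the cleared form `z · Uₖ(s) = …` whenever
`s² = 1 - z²`, and follow by a joint induction on the even and odd indices from the three-term
recurrence of `U` together with `T_{n+2} = T_n - 2(1 - X²) U_n` and `U_{n+2} = U_n + 2 T_{n+2}`.
-/

open Polynomial Polynomial.Chebyshev

namespace Polynomial.Chebyshev

variable {R : Type*} [CommRing R]

variable (R) in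
theorem T_add_two_eq_T_sub_one_sub_X_sq_mul_U (n : ℤ) :
    T R (n + 2) = T R n - 2 * (1 - X ^ 2) * U R n := by
  linear_combination 2 * T_eq_X_mul_T_sub_pol_U R n - T_add_two R n

theorem mul_eval_U_two_mul_of_sq_eq {z s : R} (hs : s ^ 2 = 1 - z ^ 2) (m : ℕ) :
    z * (U R (2 * m)).eval s = (-1) ^ m * (T R (2 * m + 1)).eval z ∧
    z * (U R (2 * m + 1)).eval s = (-1) ^ m * s * (U R (2 * m + 1)).eval z := by
  induction m with
  | zero =>
    simp only [Nat.cast_zero, mul_zero, zero_add, pow_zero, one_mul, U_zero, U_one, T_one,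
      eval_one, eval_mul, eval_ofNat, eval_X]
    constructor <;> ring
  | succ m ih =>
    obtain ⟨h_even, h_odd⟩ := ih
    set n : ℤ := 2 * m
    have h_idx : (2 * (m + 1 : ℕ) : ℤ) = n + 1 + 1 := by push_cast; ring
    have hT : (T R (n + 1 + 1 + 1)).eval z
        = (T R (n + 1)).eval z - 2 * (1 - z ^ 2) * (U R (n + 1)).eval z := by
      rw [add_assoc (n + 1), one_add_one_eq_two, T_add_two_eq_T_sub_one_sub_X_sq_mul_U]
      simp
    have hU : (U R (n + 1 + 1 + 1)).eval z
        = 2 * (T R (n + 1 + 1 + 1)).eval z + (U R (n + 1)).eval z := by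
      rw [add_assoc (n + 1), one_add_one_eq_two, U_eq_two_mul_T_add_U]
      simp
    have h_even' :
        z * (U R (n + 1 + 1)).eval s = (-1) ^ (m + 1) * (T R (n + 1 + 1 + 1)).eval z := by
      rw [U_add_one, hT]
      simp only [eval_sub, eval_mul, eval_ofNat, eval_X, add_sub_cancel_right]
      linear_combination 2 * s * h_odd - h_even + 2 * (-1) ^ m * (U R (n + 1)).eval z * hs
    rw [h_idx]
    refine ⟨h_even', ?_⟩
    rw [hU, U_add_one]
    simp only [eval_sub, eval_mul, eval_ofNat, eval_X, add_sub_cancel_right]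
    linear_combination 2 * s * h_even' - h_odd

end Polynomial.Chebyshev

/-- for any s with s² = 1 - z² and z ≠ 0:
even k: Uₖ(s) = (-1)^{k/2} z⁻¹ T_{k+1}(z);
odd k:  Uₖ(s) = (-1)^{(k-1)/2} (s/z) Uₖ(z). -/
theorem stmt15 (k : ℕ) (z s : ℂ) (hz : z ≠ 0) (hs : s ^ 2 = 1 - z ^ 2) :
    (Even k → (Polynomial.Chebyshev.U ℂ k).eval s
        = (-1) ^ (k / 2) * z⁻¹ * (Polynomial.Chebyshev.T ℂ (k + 1)).eval z) ∧
    (Odd k → (Polynomial.Chebyshev.U ℂ k).eval s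
        = (-1) ^ ((k - 1) / 2) * (s / z) * (Polynomial.Chebyshev.U ℂ k).eval z) := by
  refine ⟨fun hk => ?_, fun hk => ?_⟩
  · obtain ⟨m, rfl⟩ := even_iff_two_dvd.mp hk
    have h := (mul_eval_U_two_mul_of_sq_eq hs m).1
    rw [Nat.mul_div_cancel_left m two_pos]
    push_cast
    field_simp
    linear_combination h
  · obtain ⟨m, rfl⟩ := hk
    have h := (mul_eval_U_two_mul_of_sq_eq hs m).2
    rw [Nat.add_sub_cancel, Nat.mul_div_cancel_left m two_pos]
    push_cast
    field_simp
    linear_combination h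
end
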